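/- arXiv:1905.11281 — 2 statements merged into one kernel-verified Lean document; each statement's English description precedes it below -/
import Mathlib

section
/- Let (N, W) be a Lyndon pair with N finite of cardinality d, and let s be the maximal length of a word in N. Then W is finite with |W| ≤ d(d−1)/2, and every word in W has length at most 2s. -/
/-- A Lyndon word: a nonempty word strictly lexicographically smaller than
all of its proper cyclic rotations. -/
def IsLyndon {X : Type*} [LinearOrder X] (w : List X) : Prop :=
  w ≠ [] ∧ ∀ a b : List X, a ≠ [] → b ≠ [] → w = a ++ b →
    List.Lex (· < ·) w (b ++ a)

/-- `N` is a set of Lyndon words containing every letter of the alphabet and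
closed under taking Lyndon factors ("Lyndon atoms"). -/
def IsLyndonSystem {X : Type*} [LinearOrder X] (N : Set (List X)) : Prop :=
  (∀ w ∈ N, IsLyndon w) ∧ (∀ x : X, [x] ∈ N) ∧
    (∀ w ∈ N, ∀ u : List X, IsLyndon u → u <:+: w → u ∈ N)

/-- The antichain `W(N)` of Lyndon words associated to `N`: Lyndon words not
in `N` all of whose proper Lyndon factors lie in `N`. -/
def WSet {X : Type*} [LinearOrder X] (N : Set (List X)) : Set (List X) :=
  {w | IsLyndon w ∧ w ∉ N ∧ ∀ u : List X, IsLyndon u → u <:+: w → u ≠ w → u ∈ N}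

section Aux

variable {X : Type*} [LinearOrder X]

lemma lex_iff_lt (l l' : List X) : List.Lex (· < ·) l l' ↔ l < l' := Iff.rfl

lemma lex_irrefl (l : List X) : ¬ List.Lex (· < ·) l l := lt_irrefl l

lemma lex_trans {a b c : List X} (h1 : List.Lex (· < ·) a b) (h2 : List.Lex (· < ·) b c) :
    List.Lex (· < ·) a c := lt_trans (a := a) (b := b) (c := c) h1 h2

lemma lex_trichotomy (a b : List X) :
    List.Lex (· < ·) a b ∨ a = b ∨ List.Lex (· < ·) b a := lt_trichotomy a b

/-- A proper extension is lexicographically larger. -/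
lemma lex_append_right' (l t : List X) (ht : t ≠ []) : List.Lex (· < ·) l (l ++ t) := by
  induction l with
  | nil =>
    cases t with
    | nil => exact absurd rfl ht
    | cons a t => exact List.Lex.nil
  | cons a l ih => exact List.Lex.cons ih

/-- If `a < c` and `a` is not a prefix of `c`, the comparison is decided strictly,
so it survives appending anything. -/
lemma lex_append_of_lex {a c : List X} (h : List.Lex (· < ·) a c) (hp : ¬ a <+: c)
    (b d : List X) : List.Lex (· < ·) (a ++ b) (c ++ d) := by
  induction a generalizing c with
  | nil => exact absurd (List.nil_prefix) hp
  | cons x a ih =>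
    cases c with
    | nil => cases h
    | cons y c =>
      cases h with
      | rel hxy => exact List.Lex.rel hxy
      | cons h' =>
        refine List.Lex.cons (ih h' ?_ )
        intro hpre
        exact hp (List.cons_prefix_cons.mpr ⟨rfl, hpre⟩)

/-- If `x < y ++ z` and `y` is not a prefix of `x`, then `x < y`. -/
lemma lex_of_lex_append {x y z : List X} (h : List.Lex (· < ·) x (y ++ z))
    (hp : ¬ y <+: x) : List.Lex (· < ·) x y := by
  induction x generalizing y with
  | nil =>
    cases y with
    | nil => exact absurd (List.nil_prefix) hp
    | cons q y => exact List.Lex.nil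
  | cons p x ih =>
    cases y with
    | nil => exact absurd (List.nil_prefix) hp
    | cons q y =>
      cases h with
      | rel hxy => exact List.Lex.rel hxy
      | cons h' =>
        refine List.Lex.cons (ih h' ?_)
        intro hpre
        exact hp (List.cons_prefix_cons.mpr ⟨rfl, hpre⟩)

/-- Cancel a common prefix on the left. -/
lemma lex_of_append_left {x y : List X} (p : List X)
    (h : List.Lex (· < ·) (p ++ x) (p ++ y)) : List.Lex (· < ·) x y := by
  induction p with
  | nil => exact h
  | cons a p ih =>
    cases h with
    | rel hr => exact absurd hr (lt_irrefl a)
    | cons h' => exact ih h'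

/-- A Lyndon word is lexicographically smaller than each of its proper suffixes. -/
lemma lyndon_lex_suffix {w a b : List X} (hw : IsLyndon w) (ha : a ≠ []) (hb : b ≠ [])
    (heq : w = a ++ b) : List.Lex (· < ·) w b := by
  have h := hw.2 a b ha hb heq
  by_cases hp : b <+: w
  · exfalso
    obtain ⟨c, hc⟩ := hp
    have hlen : a.length + b.length = b.length + c.length := by
      have := congrArg List.length hc
      simp [heq] at this ⊢
      omega
    have hc_ne : c ≠ [] := by
      intro hcnil
      subst hcnil
      simp at hlen
      exact ha hlen
    -- h : Lex w (b ++ a), w = b ++ c, cancel b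
    have h2 : List.Lex (· < ·) c a := by
      apply lex_of_append_left b
      rw [hc]; exact h
    have h3 := hw.2 b c hb hc_ne hc.symm
    have hcpre : ¬ c <+: a := by
      intro hpre
      have : c = a := List.IsPrefix.eq_of_length hpre (by omega)
      subst this
      exact lex_irrefl c h2
    have h4 : List.Lex (· < ·) (c ++ b) (a ++ b) := lex_append_of_lex h2 hcpre b b
    rw [← heq] at h4
    exact lex_irrefl w (lex_trans h3 h4)
  · exact lex_of_lex_append h hp

/-- Converse: a nonempty word smaller than all its proper suffixes is Lyndon. -/
lemma isLyndon_of_lex_suffix {w : List X} (hw : w ≠ [])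
    (h : ∀ a b : List X, a ≠ [] → b ≠ [] → w = a ++ b → List.Lex (· < ·) w b) :
    IsLyndon w := by
  refine ⟨hw, fun a b ha hb heq => ?_⟩
  have h1 := h a b ha hb heq
  have hp : ¬ w <+: b := by
    intro hpre
    have hl := hpre.length_le
    have : w.length = a.length + b.length := by simp [heq]
    have ha' : a.length ≠ 0 := fun h0 => ha (List.length_eq_zero_iff.mp h0)
    omega
  have := lex_append_of_lex h1 hp [] a
  simpa using this

/-- Standard (Chen–Fox–Lyndon) factorization: a Lyndon word of length ≥ 2
splits as a product of two shorter Lyndon words. -/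
lemma std_factorization {w : List X} (hw : IsLyndon w) (h2 : 2 ≤ w.length) :
    ∃ u v : List X, u ≠ [] ∧ v ≠ [] ∧ w = u ++ v ∧ IsLyndon u ∧ IsLyndon v := by
  classical
  set S : Set (List X) := {t | t ≠ [] ∧ t ≠ w ∧ t <:+ w} with hS
  have hSfin : S.Finite := by
    apply Set.Finite.subset (w.tails.toFinset.finite_toSet)
    intro t ht
    simp only [List.coe_toFinset, Set.mem_setOf_eq, List.mem_tails]
    exact ht.2.2
  have hSne : S.Nonempty := by
    refine ⟨w.drop (w.length - 1), ?_, ?_, List.drop_suffix _ _⟩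
    · intro hnil
      have := congrArg List.length hnil
      simp at this
      omega
    · intro heqw
      have := congrArg List.length heqw
      simp at this
      omega
  obtain ⟨v, hvS, hvmin⟩ := Set.exists_min_image S id hSfin hSne
  obtain ⟨hv_ne, hv_new, u, hu⟩ := hvS
  have hu_ne : u ≠ [] := by
    intro hnil; subst hnil; simp at hu; exact hv_new hu
  -- minimality in Lex form
  have hmin : ∀ b ∈ S, b ≠ v → List.Lex (· < ·) v b := by
    intro b hb hbne
    have := hvmin b hb
    simp only [id] at this
    exact lt_of_le_of_ne this (Ne.symm hbne)
  -- v is Lyndon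
  have hvL : IsLyndon v := by
    refine isLyndon_of_lex_suffix hv_ne ?_
    intro a b ha hb heq
    have hbS : b ∈ S := by
      refine ⟨hb, ?_, ?_⟩
      · have hwlen : w.length = u.length + (a.length + b.length) := by
          rw [← hu, List.length_append, heq, List.length_append]
        have ha' : a.length ≠ 0 := fun h0 => ha (List.length_eq_zero_iff.mp h0)
        have hu' : u.length ≠ 0 := fun h0 => hu_ne (List.length_eq_zero_iff.mp h0)
        intro hbw
        have := congrArg List.length hbw
        omega
      · exact List.IsSuffix.trans ⟨a, heq.symm⟩ ⟨u, hu⟩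
    refine hmin b hbS ?_
    intro hbv
    have hvlen : v.length = a.length + b.length := by
      rw [heq, List.length_append]
    have ha' : a.length ≠ 0 := fun h0 => ha (List.length_eq_zero_iff.mp h0)
    have := congrArg List.length hbv
    omega
  -- u is Lyndon
  have huL : IsLyndon u := by
    refine isLyndon_of_lex_suffix hu_ne ?_
    intro a b ha hb heq
    by_contra hnot
    -- FactA : w < b ++ v
    have hbv : List.Lex (· < ·) w (b ++ v) := by
      refine lyndon_lex_suffix hw ha (by simp [hb]) ?_
      rw [← hu, heq, List.append_assoc]
    by_cases hbp : b <+: u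
    · obtain ⟨c, hc⟩ := hbp
      have hc_ne : c ≠ [] := by
        have hulen : u.length = b.length + c.length := by
          rw [← hc, List.length_append]
        have hulen2 : u.length = a.length + b.length := by
          rw [heq, List.length_append]
        have ha' : a.length ≠ 0 := fun h0 => ha (List.length_eq_zero_iff.mp h0)
        intro hnil
        have : c.length = 0 := by rw [hnil]; rfl
        omega
      -- w = b ++ (c ++ v)
      have hw_eq : w = b ++ (c ++ v) := by
        rw [← hu, ← hc, List.append_assoc]
      have h5 : List.Lex (· < ·) (c ++ v) v := by
        apply lex_of_append_left b
        rw [← hw_eq]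
        exact hbv
      have hcvS : (c ++ v) ∈ S := by
        refine ⟨by simp [hc_ne], ?_, ⟨b, hw_eq.symm⟩⟩
        · have h2 : w.length = b.length + (c ++ v).length := by
            rw [hw_eq, List.length_append]
          have hb' : b.length ≠ 0 := fun h0 => hb (List.length_eq_zero_iff.mp h0)
          intro hcvw
          have := congrArg List.length hcvw
          omega
      rcases eq_or_ne (c ++ v) v with hcv | hcv
      · rw [hcv] at h5; exact lex_irrefl v h5
      · exact lex_irrefl v (lex_trans (hmin _ hcvS hcv) h5)
    · -- b not a prefix of u : from ¬ (u < b) get b < u, decided strictly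
      have hbu : List.Lex (· < ·) b u := by
        rcases lex_trichotomy u b with h | h | h
        · exact absurd h hnot
        · exfalso
          have hulen : u.length = a.length + b.length := by
            rw [heq, List.length_append]
          have ha' : a.length ≠ 0 := fun h0 => ha (List.length_eq_zero_iff.mp h0)
          have := congrArg List.length h
          omega
        · exact h
      have h6 : List.Lex (· < ·) (b ++ v) (u ++ v) := lex_append_of_lex hbu hbp v v
      rw [hu] at h6
      exact lex_irrefl w (lex_trans hbv h6)
  exact ⟨u, v, hu_ne, hv_ne, hu.symm, huL, hvL⟩

end Aux

theorem stmt12 {X : Type*} [LinearOrder X] [Finite X]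
    (N : Set (List X)) (hN : IsLyndonSystem N)
    (hfin : N.Finite) (d s : ℕ) (hd : N.ncard = d)
    (hs : ∀ u ∈ N, u.length ≤ s) (hs' : ∃ u ∈ N, u.length = s) :
    (WSet N).Finite ∧ (WSet N).ncard ≤ d * (d - 1) / 2 ∧
      ∀ w ∈ WSet N, w.length ≤ 2 * s := by
  classical
  -- key decomposition of elements of WSet
  have key : ∀ w ∈ WSet N, ∃ u v : List X, u ∈ N ∧ v ∈ N ∧ w = u ++ v ∧
      List.Lex (· < ·) u v := by
    intro w hw
    obtain ⟨hwL, hwN, hwfac⟩ := hw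
    have hlen2 : 2 ≤ w.length := by
      have h1 : w.length ≠ 0 := fun h0 => hwL.1 (List.length_eq_zero_iff.mp h0)
      have h2 : w.length ≠ 1 := by
        intro h1'
        obtain ⟨x, hx⟩ := List.length_eq_one_iff.mp h1'
        exact hwN (hx ▸ hN.2.1 x)
      omega
    obtain ⟨u, v, hu_ne, hv_ne, heq, huL, hvL⟩ := std_factorization hwL hlen2
    have hlw : w.length = u.length + v.length := by
      rw [heq, List.length_append]
    have hu' : u.length ≠ 0 := fun h0 => hu_ne (List.length_eq_zero_iff.mp h0)
    have hv' : v.length ≠ 0 := fun h0 => hv_ne (List.length_eq_zero_iff.mp h0)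
    have huw : u ≠ w := by
      intro h
      have := congrArg List.length h
      omega
    have hvw : v ≠ w := by
      intro h
      have := congrArg List.length h
      omega
    have huN : u ∈ N := hwfac u huL (List.IsPrefix.isInfix ⟨v, heq.symm⟩) huw
    have hvN : v ∈ N := hwfac v hvL (List.IsSuffix.isInfix ⟨u, heq.symm⟩) hvw
    refine ⟨u, v, huN, hvN, heq, ?_⟩
    have h1 : List.Lex (· < ·) u w := heq ▸ lex_append_right' u v hv_ne
    have h2 : List.Lex (· < ·) w v := lyndon_lex_suffix hwL hu_ne hv_ne heq
    exact lex_trans h1 h2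
  -- the finite set of ordered pairs
  set t : Finset (List X) := hfin.toFinset with ht
  set P : Finset (List X × List X) := (t ×ˢ t).filter (fun p => p.1 < p.2) with hP
  have himg : WSet N ⊆ (fun p : List X × List X => p.1 ++ p.2) '' ↑P := by
    intro w hw
    obtain ⟨u, v, huN, hvN, heq, hlt⟩ := key w hw
    refine ⟨(u, v), ?_, heq.symm⟩
    simp only [hP, Finset.coe_filter, Set.mem_setOf_eq, Finset.mem_product, ht,
      Set.Finite.mem_toFinset]
    exact ⟨⟨huN, hvN⟩, hlt⟩
  have hWfin : (WSet N).Finite :=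
    Set.Finite.subset ((P.finite_toSet).image _) himg
  refine ⟨hWfin, ?_, ?_⟩
  · -- cardinality bound
    have hc1 : (WSet N).ncard ≤ ((fun p : List X × List X => p.1 ++ p.2) '' ↑P).ncard :=
      Set.ncard_le_ncard himg ((P.finite_toSet).image _)
    have hc2 : ((fun p : List X × List X => p.1 ++ p.2) '' ↑P).ncard ≤
        (↑P : Set (List X × List X)).ncard :=
      Set.ncard_image_le P.finite_toSet
    have hc3 : (↑P : Set (List X × List X)).ncard = P.card := Set.ncard_coe_finset P
    -- count P via 2-element subsets
    have htd : t.card = d := by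
      rw [← hd, Set.ncard_eq_toFinset_card N hfin]
    have hc4 : P.card ≤ (t.powersetCard 2).card := by
      refine Finset.card_le_card_of_injOn (fun p => {p.1, p.2}) ?_ ?_
      · intro p hp
        simp only [hP, Finset.mem_coe, Finset.mem_filter, Finset.mem_product] at hp
        rw [Finset.mem_coe, Finset.mem_powersetCard]
        refine ⟨?_, Finset.card_pair (ne_of_lt hp.2)⟩
        intro x hx
        rcases Finset.mem_insert.mp hx with h | h
        · exact h ▸ hp.1.1
        · exact (Finset.mem_singleton.mp h) ▸ hp.1.2
      · intro p hp q hq hpq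
        simp only [Finset.coe_filter, Set.mem_setOf_eq, Finset.mem_product, hP,
          Finset.mem_coe, Finset.mem_filter] at hp hq
        have hp2 := hp.2
        have hq2 := hq.2
        replace hpq : ({p.1, p.2} : Finset (List X)) = {q.1, q.2} := hpq
        have h1 : q.1 ∈ ({p.1, p.2} : Finset (List X)) := by
          rw [hpq]; exact Finset.mem_insert_self _ _
        have h2 : q.2 ∈ ({p.1, p.2} : Finset (List X)) := by
          rw [hpq]; exact Finset.mem_insert.mpr (Or.inr (Finset.mem_singleton_self _))
        simp only [Finset.mem_insert, Finset.mem_singleton] at h1 h2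
        have : p.1 = q.1 ∧ p.2 = q.2 := by
          rcases h1 with h1 | h1 <;> rcases h2 with h2 | h2 <;> rw [h1, h2] at hq2
          · exact absurd hq2 (lt_irrefl _)
          · exact ⟨h1.symm, h2.symm⟩
          · exact absurd (lt_trans hp2 hq2) (lt_irrefl _)
          · exact absurd hq2 (lt_irrefl _)
        exact Prod.ext this.1 this.2
    have hc5 : (t.powersetCard 2).card = d * (d - 1) / 2 := by
      rw [Finset.card_powersetCard, htd, Nat.choose_two_right]
    omega
  · -- length bound
    intro w hw
    obtain ⟨u, v, huN, hvN, heq, _⟩ := key w hw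
    have h1 := hs u huN
    have h2 := hs v hvN
    have : w.length = u.length + v.length := by simp [heq]
    omega
end

section
/- The Fibonacci-Lyndon words f_n, defined by f₀ = x, f₁ = y, f_{2n} = f_{2n−2} f_{2n−1} and f_{2n+1} = f_{2n} f_{2n−1} for n ≥ 1, are all Lyndon words over {x < y}, the length of f_n is the n-th Fibonacci number, and in the lexicographic order they satisfy f₀ < f₂ < ⋯ < f_{2n} < ⋯ < f_{2n+1} < ⋯ < f₃ < f₁. -/
namespace List

variable {X : Type*} [LinearOrder X]

theorem lt_append_of_ne_nil {w : List X} (hw : w ≠ []) : ∀ u : List X, u < u ++ w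
  | [] => by
    obtain ⟨c, w, rfl⟩ := exists_cons_of_ne_nil hw
    exact nil_lt_cons c w
  | _ :: u => Lex.cons (lt_append_of_ne_nil hw u)

theorem lt_of_append_lt_append_left {u v : List X} : ∀ {p : List X}, p ++ u < p ++ v → u < v
  | [], h => h
  | c :: _, h => lt_of_append_lt_append_left ((cons_lt_cons_iff.mp h).resolve_left (lt_irrefl c)).2

/-- Equivalently, `u < v` and `u` is not a prefix of `v`. -/
def StrongLt (u v : List X) : Prop :=
  ∀ s t : List X, u ++ s < v ++ t

namespace StrongLt

variable {u v w : List X}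

theorem lt (h : StrongLt u v) : u < v := by
  simpa using h [] []

theorem ne_nil_right (h : StrongLt u v) : v ≠ [] := by
  rintro rfl
  exact not_lt_nil u h.lt

theorem append (h : StrongLt u v) (s t : List X) : StrongLt (u ++ s) (v ++ t) :=
  fun s' t' => by simpa only [append_assoc] using h (s ++ s') (t ++ t')

theorem append_left (p : List X) (h : StrongLt u v) : StrongLt (p ++ u) (p ++ v) :=
  fun s t => by simpa only [append_assoc] using append_left_lt (h s t)

theorem trans (huv : StrongLt u v) (hvw : StrongLt v w) : StrongLt u w :=
  fun s t => by simpa using (huv s []).trans (hvw [] t)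

end StrongLt

theorem strongLt_cons_cons {a b : X} (hab : a < b) (u v : List X) :
    StrongLt (a :: u) (b :: v) :=
  fun _ _ => Lex.rel hab

theorem strongLt_or_exists_of_lt {u v : List X} (h : u < v) :
    StrongLt u v ∨ ∃ w, w ≠ [] ∧ v = u ++ w := by
  induction h with
  | @nil b l => exact .inr ⟨b :: l, cons_ne_nil b l, rfl⟩
  | @cons a _ _ _ ih =>
    rcases ih with h | ⟨w, hw, rfl⟩
    · exact .inl (h.append_left [a])
    · exact .inr ⟨w, hw, rfl⟩
  | rel hab => exact .inl (strongLt_cons_cons hab _ _)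

theorem strongLt_of_lt_of_length_le {u v : List X} (h : u < v) (hlen : v.length ≤ u.length) :
    StrongLt u v := by
  rcases strongLt_or_exists_of_lt h with h | ⟨w, hw, rfl⟩
  · exact h
  · simp only [length_append] at hlen
    exact absurd (length_eq_zero_iff.mp (by omega)) hw

theorem strongLt_or_eq_of_append_lt_append {u v s t : List X} (hlen : u.length = v.length)
    (h : u ++ s < v ++ t) : StrongLt u v ∨ u = v := by
  rcases lt_trichotomy u v with huv | rfl | hvu
  · exact .inl (strongLt_of_lt_of_length_le huv hlen.ge)
  · exact .inr rfl
  · exact absurd h (strongLt_of_lt_of_length_le hvu hlen.le t s).asymm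

end List

open List

section Lyndon

variable {X : Type*} [LinearOrder X]

theorem isLyndon_singleton (c : X) : IsLyndon [c] := by
  refine ⟨cons_ne_nil c [], fun a b ha hb hab => absurd (congrArg length hab) ?_⟩
  have := length_pos_iff.mpr ha
  have := length_pos_iff.mpr hb
  simp only [length_singleton, length_append]
  omega

theorem IsLyndon.strongLt_of_eq_append {w u v : List X} (hw : IsLyndon w) (hu : u ≠ [])
    (hv : v ≠ []) (heq : w = u ++ v) : StrongLt w v := by
  have hrot : w < v ++ u := hw.2 u v hu hv heq
  obtain ⟨w₁, w₂, rfl, hlen₁⟩ : ∃ w₁ w₂, w = w₁ ++ w₂ ∧ w₁.length = v.length :=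
    ⟨w.take v.length, w.drop v.length, (take_append_drop _ _).symm, by simp [heq]⟩
  rcases strongLt_or_eq_of_append_lt_append hlen₁ hrot with h | hw₁
  · simpa using h.append w₂ []
  -- Now `w = v w₂ = u v` with `|w₂| = |u|`: rotating `w` at `v` gives `w₂ < u`,
  -- rotating it at `u` gives `u ≤ w₂`.
  subst w₁
  exfalso
  have hlen₂ : u.length = w₂.length := by
    have := congrArg length heq
    simp only [length_append] at this
    omega
  have hw₂ : w₂ ≠ [] := by
    rintro rfl
    exact hu (length_eq_zero_iff.mp hlen₂)
  have hlt : w₂ < u := lt_of_append_lt_append_left hrot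
  have hrot₂ : u ++ v < w₂ ++ v := heq ▸ hw.2 v w₂ hv hw₂ rfl
  rcases strongLt_or_eq_of_append_lt_append hlen₂ hrot₂ with h | rfl
  · exact lt_asymm h.lt hlt
  · exact lt_irrefl u hlt

theorem IsLyndon.append {u v : List X} (hu : IsLyndon u) (hv : IsLyndon v) (huv : u < v) :
    IsLyndon (u ++ v) := by
  have key : StrongLt (u ++ v) v := by
    rcases strongLt_or_exists_of_lt huv with h | ⟨z, hz, rfl⟩
    · simpa using h.append v []
    · exact (hv.strongLt_of_eq_append hu.1 hz rfl).append_left u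
  refine ⟨by simp [hu.1], fun a b ha hb hab => ?_⟩
  rcases append_eq_append_iff.mp hab with ⟨k, rfl, rfl⟩ | ⟨k, rfl, rfl⟩
  · have hb' : StrongLt (u ++ (k ++ b)) b := by
      rcases eq_or_ne k [] with rfl | hk
      · simpa using key
      · exact key.trans (hv.strongLt_of_eq_append hk hb rfl)
    simpa using hb' [] (u ++ k)
  · rcases eq_or_ne k [] with rfl | hk
    · simpa using key [] a
    · simpa using hu.strongLt_of_eq_append ha hk rfl v (v ++ a)

end Lyndon

structure IsFibonacciPair {X : Type*} (a b : ℕ → List X) : Prop where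
  a_succ : ∀ n, a (n + 1) = a n ++ b n
  b_succ : ∀ n, b (n + 1) = a (n + 1) ++ b n

namespace IsFibonacciPair

variable {X : Type*} {a b : ℕ → List X}

theorem length_eq_fib (h : IsFibonacciPair a b) (ha : (a 0).length = 1) (hb : (b 0).length = 1) :
    ∀ n, (a n).length = Nat.fib (2 * n + 1) ∧ (b n).length = Nat.fib (2 * n + 2)
  | 0 => ⟨ha, hb⟩
  | n + 1 => by
    obtain ⟨iha, ihb⟩ := length_eq_fib h ha hb n
    have ha' : (a (n + 1)).length = Nat.fib (2 * n + 3) := by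
      rw [h.a_succ, length_append, iha, ihb]
      exact Nat.fib_add_two.symm
    refine ⟨ha', ?_⟩
    rw [h.b_succ, length_append, ha', ihb, add_comm]
    exact Nat.fib_add_two.symm

variable [LinearOrder X]

theorem strongLt_b_succ_of_strongLt (h : IsFibonacciPair a b) {n : ℕ}
    (hn : StrongLt (a (n + 1)) (b n)) : StrongLt (b (n + 1)) (b n) := by
  simpa [← h.b_succ] using hn.append (b n) []

theorem strongLt_a_succ_b (h : IsFibonacciPair a b) (h0 : StrongLt (a 0) (b 0)) :
    ∀ n, StrongLt (a (n + 1)) (b n)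
  | 0 => by simpa [h.a_succ] using h0.append (b 0) []
  | n + 1 => by
    have := (h.strongLt_b_succ_of_strongLt (strongLt_a_succ_b h h0 n)).append_left (a (n + 1))
    rwa [← h.b_succ n, ← h.a_succ] at this

theorem strongLt_a_b_of_lt (h : IsFibonacciPair a b) (h0 : StrongLt (a 0) (b 0)) {m n : ℕ}
    (hnm : n < m) : StrongLt (a m) (b n) := by
  induction m, hnm using Nat.le_induction with
  | base => exact h.strongLt_a_succ_b h0 n
  | succ m _ ih => simpa [← h.a_succ] using ih.append (b m) []

theorem strictMono_a (h : IsFibonacciPair a b) (h0 : StrongLt (a 0) (b 0)) : StrictMono a :=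
  strictMono_nat_of_lt_succ fun n => by
    rw [h.a_succ]
    exact lt_append_of_ne_nil (h.strongLt_a_succ_b h0 n).ne_nil_right _

theorem strictAnti_b (h : IsFibonacciPair a b) (h0 : StrongLt (a 0) (b 0)) : StrictAnti b :=
  strictAnti_nat_of_succ_lt fun n =>
    (h.strongLt_b_succ_of_strongLt (h.strongLt_a_succ_b h0 n)).lt

theorem a_lt_b (h : IsFibonacciPair a b) (h0 : StrongLt (a 0) (b 0)) (m n : ℕ) : a m < b n := by
  rcases le_or_gt m n with hmn | hnm
  · refine ((h.strictMono_a h0).monotone hmn).trans_lt ?_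
    cases n with
    | zero => exact h0.lt
    | succ n =>
      rw [h.b_succ]
      exact lt_append_of_ne_nil (h.strongLt_a_succ_b h0 n).ne_nil_right _
  · exact (h.strongLt_a_b_of_lt h0 hnm).lt

theorem isLyndon (h : IsFibonacciPair a b) (h0 : StrongLt (a 0) (b 0)) (ha : IsLyndon (a 0))
    (hb : IsLyndon (b 0)) : ∀ n, IsLyndon (a n) ∧ IsLyndon (b n)
  | 0 => ⟨ha, hb⟩
  | n + 1 => by
    obtain ⟨iha, ihb⟩ := isLyndon h h0 ha hb n
    have ha' : IsLyndon (a (n + 1)) := h.a_succ n ▸ iha.append ihb (h.a_lt_b h0 n n)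
    exact ⟨ha', h.b_succ n ▸ ha'.append ihb (h.strongLt_a_succ_b h0 n).lt⟩

end IsFibonacciPair

theorem stmt19 {X : Type*} [LinearOrder X] (x y : X) (hxy : x < y)
    (f : ℕ → List X)
    (hf0 : f 0 = [x]) (hf1 : f 1 = [y])
    (heven : ∀ n : ℕ, 1 ≤ n → f (2 * n) = f (2 * n - 2) ++ f (2 * n - 1))
    (hodd : ∀ n : ℕ, 1 ≤ n → f (2 * n + 1) = f (2 * n) ++ f (2 * n - 1)) :
    (∀ n : ℕ, IsLyndon (f n)) ∧
    (∀ n : ℕ, (f n).length = Nat.fib (n + 1)) ∧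
    (∀ m n : ℕ, m < n → List.Lex (· < ·) (f (2 * m)) (f (2 * n))) ∧
    (∀ m n : ℕ, List.Lex (· < ·) (f (2 * m)) (f (2 * n + 1))) ∧
    (∀ m n : ℕ, m < n → List.Lex (· < ·) (f (2 * n + 1)) (f (2 * m + 1))) := by
  have hpair : IsFibonacciPair (fun n => f (2 * n)) (fun n => f (2 * n + 1)) := by
    constructor <;> intro n
    · simpa [show 2 * (n + 1) - 2 = 2 * n by omega, show 2 * (n + 1) - 1 = 2 * n + 1 by omega]
        using heven (n + 1) n.succ_pos
    · simpa [show 2 * (n + 1) - 1 = 2 * n + 1 by omega] using hodd (n + 1) n.succ_pos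
  have h0 : StrongLt (f 0) (f 1) := hf0 ▸ hf1 ▸ strongLt_cons_cons hxy [] []
  have hlyndon := hpair.isLyndon h0 (hf0 ▸ isLyndon_singleton x) (hf1 ▸ isLyndon_singleton y)
  have hlength := hpair.length_eq_fib (by simp [hf0]) (by simp [hf1])
  refine ⟨fun n => ?_, fun n => ?_, fun m n hmn => hpair.strictMono_a h0 hmn,
    hpair.a_lt_b h0, fun m n hmn => hpair.strictAnti_b h0 hmn⟩
  all_goals obtain ⟨k, rfl | rfl⟩ := n.even_or_odd'
  exacts [(hlyndon k).1, (hlyndon k).2, (hlength k).1, (hlength k).2]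
end
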